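/- arXiv:0805.1979 — 3 statements merged into one kernel-verified Lean document; each statement's English description precedes it below -/
import Mathlib

section
/- There is no loop x : S¹ → GL(n,ℂ) of the form x = x₋ · D · x₊ with x₋ ∈ Λ⁻GL(n,ℂ), x₊ ∈ Λ⁺GL(n,ℂ), D(λ) = diag(λ^{k₁},…,λ^{kₙ}) with k₁ ≥ ⋯ ≥ kₙ integers not all zero, such that x satisfies the reality condition x(λ) = (conj(x(conj λ))ᵀ)⁻¹. -/
/-!
Put `A(z) = gp(z) gp(z̄)ᴴ` and `P(w) = gm(w̄)ᴴ gm(w)`; both are holomorphic on the disc. Writing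
`D(z) = diag(z^{k₁}, …, z^{kₙ})`, the reality condition becomes `D(z) A(z) D(z) P(z⁻¹) = 1` on the
unit circle. If `kᵢ < 0`, its `(i, i)` entry gives `P(z⁻¹)ᵢᵢ = z^{-2kᵢ} (A(z)⁻¹)ᵢᵢ`, which is `z`
times a function holomorphic on the disc. Circle averages are invariant under `z ↦ z⁻¹`, so the
mean value property forces `P(0)ᵢᵢ = 0`; for `kᵢ > 0` the same argument with `A` and `P` exchanged
gives `A(0)ᵢᵢ = 0`. Both contradict the positive definiteness of `P(0) = gm(0)ᴴ gm(0)` and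
`A(0) = gp(0) gp(0)ᴴ`.
-/

/-- A loop `S¹ → GL(n,ℂ)` extending holomorphically to the closed unit disc with
invertible values (an element of `Λ⁺GL(n,ℂ)`, via its extension): entrywise
continuity on the closed disc, entrywise holomorphy on the open disc, invertibility. -/
def HolDisc (n : ℕ) (f : ℂ → Matrix (Fin n) (Fin n) ℂ) : Prop :=
  (∀ i j, ContinuousOn (fun z => f z i j) (Metric.closedBall 0 1)) ∧
    (∀ i j, DifferentiableOn ℂ (fun z => f z i j) (Metric.ball 0 1)) ∧
    ∀ z ∈ Metric.closedBall (0 : ℂ) 1, IsUnit (f z)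

open Metric Matrix Real ComplexConjugate ComplexOrder

-- Any norm would do; this one makes `Matrix ι ι ℂ` a normed `ℂ`-algebra.
attribute [local instance] Matrix.linftyOpNormedAddCommGroup Matrix.linftyOpNormedSpace
  Matrix.linftyOpNormedRing Matrix.linftyOpNormedAlgebra

theorem DiffContOnCl.mul {𝕜 E A : Type*} [NontriviallyNormedField 𝕜] [NormedAddCommGroup E]
    [NormedSpace 𝕜 E] [NormedRing A] [NormedAlgebra 𝕜 A] {f g : E → A} {s : Set E}
    (hf : DiffContOnCl 𝕜 f s) (hg : DiffContOnCl 𝕜 g s) : DiffContOnCl 𝕜 (fun x => f x * g x) s :=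
  ⟨hf.1.fun_mul hg.1, hf.2.mul hg.2⟩

theorem DiffContOnCl.ringInverse {𝕜 E A : Type*} [NontriviallyNormedField 𝕜]
    [NormedAddCommGroup E] [NormedSpace 𝕜 E] [NormedRing A] [NormedAlgebra 𝕜 A] [CompleteSpace A]
    {f : E → A} {s : Set E} (hf : DiffContOnCl 𝕜 f s) (hu : ∀ z ∈ closure s, IsUnit (f z)) :
    DiffContOnCl 𝕜 (fun z => Ring.inverse (f z)) s where
  differentiableOn := hf.differentiableOn.inverse fun z hz => hu z (subset_closure hz)
  continuousOn z hz := by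
    have hinv := NormedRing.inverse_continuousAt (hu z hz).unit
    rw [IsUnit.unit_spec] at hinv
    exact hinv.comp_continuousWithinAt (hf.continuousOn z hz)

theorem DiffContOnCl.star_conj {E : Type*} [NormedAddCommGroup E] [NormedSpace ℂ E]
    [StarAddMonoid E] [StarModule ℂ E] [ContinuousStar E] {f : ℂ → E} {s : Set ℂ}
    (hf : DiffContOnCl ℂ f s) (hs : IsOpen s) (hconj : Set.MapsTo conj s s) :
    DiffContOnCl ℂ (star ∘ f ∘ conj) s where
  differentiableOn _ hz :=
    (differentiableAt_star_conj_iff.2 (hf.differentiableAt hs (hconj hz))).differentiableWithinAt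
  continuousOn := continuous_star.comp_continuousOn
    (hf.continuousOn.comp Complex.continuous_conj.continuousOn
      (hconj.closure Complex.continuous_conj))

theorem diffContOnCl_matrix_iff {ι : Type*} [Fintype ι] {f : ℂ → Matrix ι ι ℂ} {s : Set ℂ} :
    DiffContOnCl ℂ f s ↔ ∀ i j, DiffContOnCl ℂ (fun z => f z i j) s := by
  refine ⟨fun h i j =>
    (entryLinearMap ℂ ℂ i j).toContinuousLinearMap.differentiable.comp_diffContOnCl h,
    fun h => ⟨?_, continuousOn_pi.2 fun i => continuousOn_pi.2 fun j => (h i j).continuousOn⟩⟩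
  -- `differentiableOn_pi` is about the sup norm on `ι → ι → ℂ`; transport it along the identity.
  let e := (ofLinearEquiv ℂ (m := ι) (n := ι) (α := ℂ)).symm.toContinuousLinearEquiv
  exact e.comp_differentiableOn_iff.1
    (differentiableOn_pi.2 fun i => differentiableOn_pi.2 fun j => (h i j).differentiableOn)

theorem HolDisc.diffContOnCl {n : ℕ} {f : ℂ → Matrix (Fin n) (Fin n) ℂ} (hf : HolDisc n f) :
    DiffContOnCl ℂ f (ball 0 1) := by
  refine diffContOnCl_matrix_iff.2 fun i j => ⟨hf.2.1 i j, ?_⟩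
  rw [closure_ball _ one_ne_zero]
  exact hf.1 i j

theorem apply_zero_eq_zero_of_eqOn_sphere {E : Type*} [NormedAddCommGroup E] [NormedSpace ℂ E]
    [CompleteSpace E] {a b : ℂ → E} (ha : DiffContOnCl ℂ a (ball 0 1))
    (hb : DiffContOnCl ℂ b (ball 0 1))
    (h : Set.EqOn (fun z => a z⁻¹) (fun z => z • b z) (sphere 0 1)) : a 0 = 0 := by
  rw [← abs_one] at ha hb
  calc a 0 = circleAverage a 0 1 := ha.circleAverage.symm
    _ = circleAverage (a ·⁻¹) 0 1 := circleAverage_zero_one_congr_inv.symm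
    _ = circleAverage (fun z => z • b z) 0 1 := circleAverage_congr_sphere (by simpa using h)
    _ = (0 : ℂ) • b 0 := (differentiable_id.diffContOnCl.smul hb).circleAverage
    _ = 0 := zero_smul ℂ _

variable {ι : Type*} [Fintype ι]

-- `hermReflect g = (ρ̂ g)⁻¹` for the reality involution `ρ̂`.
def hermReflect (g : ℂ → Matrix ι ι ℂ) (z : ℂ) : Matrix ι ι ℂ := (g (star z))ᴴ

theorem DiffContOnCl.hermReflect {g : ℂ → Matrix ι ι ℂ} {r : ℝ}
    (hg : DiffContOnCl ℂ g (ball 0 r)) : DiffContOnCl ℂ (hermReflect g) (ball 0 r) :=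
  diffContOnCl_matrix_iff.2 fun i j =>
    (diffContOnCl_matrix_iff.1 hg j i).star_conj isOpen_ball fun z hz => by simpa using hz

theorem HolDisc.isUnit_hermReflect {n : ℕ} {g : ℂ → Matrix (Fin n) (Fin n) ℂ} (hg : HolDisc n g)
    {z : ℂ} (hz : z ∈ closedBall (0 : ℂ) 1) : IsUnit (hermReflect g z) :=
  (isUnit_conjTranspose _).2 (hg.2.2 _ (by simpa using hz))

variable [DecidableEq ι]

theorem conjTranspose_mul_self_apply_self_ne_zero {M : Matrix ι ι ℂ} (hM : IsUnit M) (i : ι) :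
    (Mᴴ * M) i i ≠ 0 :=
  (PosDef.conjTranspose_mul_self M (mulVec_injective_iff_isUnit.2 hM)).diag_pos.ne'

noncomputable def diagZpow (k : ι → ℤ) (z : ℂ) : Matrix ι ι ℂ := diagonal fun i => z ^ k i

theorem diagZpow_mul_mul_mul_eq_one_of_reality {gm gp : ℂ → Matrix ι ι ℂ} {k : ι → ℤ} {z : ℂ}
    (h : gm z⁻¹ * diagZpow k z * gp z *
      (gm (star z)⁻¹ * diagZpow k (star z) * gp (star z))ᴴ = 1) :
    diagZpow k z * (gp z * hermReflect gp z) * diagZpow k z *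
      (hermReflect gm z⁻¹ * gm z⁻¹) = 1 := by
  have hD : (diagZpow k (star z))ᴴ = diagZpow k z := by
    simp [diagZpow, diagonal_conjTranspose, star_zpow₀]
  rw [conjTranspose_mul, conjTranspose_mul, hD, ← star_inv₀, mul_assoc, mul_assoc,
    mul_eq_one_comm] at h
  simpa only [hermReflect, mul_assoc] using h

theorem diagZpow_neg_mul_mul_mul_eq_one {F G : ℂ → Matrix ι ι ℂ} {k : ι → ℤ}
    (h : ∀ z ∈ sphere (0 : ℂ) 1, diagZpow k z * F z * diagZpow k z * G z⁻¹ = 1) :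
    ∀ z ∈ sphere (0 : ℂ) 1, diagZpow (-k) z * G z * diagZpow (-k) z * F z⁻¹ = 1 := by
  intro z hz
  have hD : diagZpow k z⁻¹ = diagZpow (-k) z := by simp [diagZpow, _root_.inv_zpow']
  have h' := h z⁻¹ (by simpa using hz)
  rw [inv_inv, hD, mul_assoc, mul_assoc, mul_eq_one_comm, mul_assoc, mul_assoc,
    mul_eq_one_comm] at h'
  simpa only [mul_assoc] using h'

theorem apply_zero_diag_eq_zero_of_diagZpow_mul_eq_one {F G : ℂ → Matrix ι ι ℂ} {k : ι → ℤ}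
    (hF : DiffContOnCl ℂ F (ball 0 1)) (hFu : ∀ z ∈ closedBall (0 : ℂ) 1, IsUnit (F z))
    (hG : DiffContOnCl ℂ G (ball 0 1))
    (h : ∀ z ∈ sphere (0 : ℂ) 1, diagZpow k z * F z * diagZpow k z * G z⁻¹ = 1)
    {i : ι} (hi : k i < 0) : G 0 i i = 0 := by
  obtain ⟨m, hm⟩ : ∃ m : ℕ, k i = -((m + 1 : ℕ) : ℤ) := ⟨(-k i - 1).toNat, by omega⟩
  have hFinv : DiffContOnCl ℂ (fun z => (F z)⁻¹) (ball 0 1) := by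
    simp only [nonsing_inv_eq_ringInverse]
    exact hF.ringInverse (by rwa [closure_ball _ one_ne_zero])
  refine apply_zero_eq_zero_of_eqOn_sphere (diffContOnCl_matrix_iff.1 hG i i)
    (b := fun z => z ^ (2 * m + 1) * (F z)⁻¹ i i)
    ((differentiable_pow _).diffContOnCl.mul (diffContOnCl_matrix_iff.1 hFinv i i)) fun z hz => ?_
  -- `G(z⁻¹)ᵢᵢ = z^(-2kᵢ) (F z)⁻¹ᵢᵢ` with `-2kᵢ = 2m + 2`
  have hz0 : z ≠ 0 := ne_zero_of_mem_sphere one_ne_zero ⟨z, hz⟩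
  have hinv : (F z)⁻¹ = diagZpow k z * G z⁻¹ * diagZpow k z := by
    have h' := h z hz
    rw [mul_assoc, mul_assoc, mul_eq_one_comm] at h'
    exact inv_eq_right_inv (by simpa only [mul_assoc] using h')
  have hii := congrArg (· i i) hinv
  simp only [diagZpow, diagonal_mul, mul_diagonal] at hii
  simp only [smul_eq_mul, hii, hm, _root_.zpow_neg, zpow_natCast]
  field_simp
  ring

/-- `x₋ ∈ Λ⁻GL(n,ℂ)` is encoded by `gm`, holomorphic on the disc, via `x₋(z) = gm(z⁻¹)`. -/
theorem stmt_2_general (n : ℕ) (k : Fin n → ℤ) (gm gp : ℂ → Matrix (Fin n) (Fin n) ℂ)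
    (hm : HolDisc n gm) (hp : HolDisc n gp) (hk : k ≠ 0) :
    ¬ (∀ z : ℂ, ‖z‖ = 1 →
        (gm z⁻¹ * Matrix.diagonal (fun i => z ^ k i) * gp z) *
          (gm (star z)⁻¹ * Matrix.diagonal (fun i => (star z) ^ k i)
            * gp (star z)).conjTranspose = 1) := by
  intro hreal
  set A : ℂ → Matrix (Fin n) (Fin n) ℂ := fun z => gp z * hermReflect gp z
  set P : ℂ → Matrix (Fin n) (Fin n) ℂ := fun z => hermReflect gm z * gm z
  have hA : DiffContOnCl ℂ A (ball 0 1) := hp.diffContOnCl.mul hp.diffContOnCl.hermReflect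
  have hP : DiffContOnCl ℂ P (ball 0 1) := hm.diffContOnCl.hermReflect.mul hm.diffContOnCl
  have hrel : ∀ z ∈ sphere (0 : ℂ) 1, diagZpow k z * A z * diagZpow k z * P z⁻¹ = 1 :=
    fun z hz => diagZpow_mul_mul_mul_eq_one_of_reality (hreal z (by simpa using hz))
  obtain ⟨i, hi⟩ := Function.ne_iff.1 hk
  rcases hi.lt_or_gt with hneg | hpos
  · refine conjTranspose_mul_self_apply_self_ne_zero (hm.2.2 0 (by simp)) i ?_
    simpa [A, P, hermReflect] using apply_zero_diag_eq_zero_of_diagZpow_mul_eq_one hA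
      (fun z hz => (hp.2.2 z hz).mul (hp.isUnit_hermReflect hz)) hP hrel hneg
  · refine conjTranspose_mul_self_apply_self_ne_zero
      ((isUnit_conjTranspose _).2 (hp.2.2 0 (by simp))) i ?_
    simpa [A, P, hermReflect] using apply_zero_diag_eq_zero_of_diagZpow_mul_eq_one hP
      (fun z hz => (hm.isUnit_hermReflect hz).mul (hm.2.2 z hz)) hA
      (diagZpow_neg_mul_mul_mul_eq_one hrel) (neg_neg_of_pos hpos)

/-- No loop of the form `x = x₋ · diag(z^{k₁},…,z^{kₙ}) · x₊`, with
`x₋ ∈ Λ⁻GL(n,ℂ)` (encoded via `gm` holomorphic on the disc, with `x₋` at `z` equal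
to `gm` at `z⁻¹`), `x₊ ∈ Λ⁺GL(n,ℂ)`, and `k₁ ≥ ⋯ ≥ kₙ` integers not all zero, can
satisfy the reality condition on the unit circle. -/
theorem stmt_2 (n : ℕ) (k : Fin n → ℤ) (gm gp : ℂ → Matrix (Fin n) (Fin n) ℂ)
    (hm : HolDisc n gm) (hp : HolDisc n gp) (hmono : Antitone k) (hk : k ≠ 0) :
    ¬ (∀ z : ℂ, ‖z‖ = 1 →
        (gm z⁻¹ * Matrix.diagonal (fun i => z ^ k i) * gp z) *
          (gm (star z)⁻¹ * Matrix.diagonal (fun i => (star z) ^ k i)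
            * gp (star z)).conjTranspose = 1) :=
  stmt_2_general n k gm gp hm hp hk
end

section
/- If a loop x : S¹ → GL(n,ℂ) satisfies the reality condition x(λ) = (conj(x(conj λ))ᵀ)⁻¹, then the winding number of λ ↦ det(x(λ)) around 0 is zero. -/
/-!
On the unit circle `conj λ = λ⁻¹`, so taking determinants in the reality condition gives
`det x(e^{it}) · conj (det x(e^{-it})) = 1`. Hence the unit-modulus part of the determinant
takes the same value at `t` and `-t`, and any continuous argument `θ` satisfies
`θ t - θ (-t) ∈ 2πℤ`. A continuous function with values in `2πℤ` is constant, so `θ` is even.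
Likewise, as `t ↦ e^{it}` is `2π`-periodic, `θ (t + 2π) - θ t` is a constant `c`, and evenness
gives `c = θ 0 - θ (-2π) = θ 0 - θ (2π) = -c`, so `c = 0`.
-/

open Complex ComplexConjugate

theorem Complex.sub_eq_sub_of_exp_mul_I_eq {X : Type*} [TopologicalSpace X] [PreconnectedSpace X]
    {f g : X → ℝ} (hf : Continuous f) (hg : Continuous g)
    (h : ∀ x, exp (I * f x) = exp (I * g x)) (x y : X) : f x - g x = f y - g y := by
  have hmem : ∀ x, f x - g x ∈ AddSubgroup.zmultiples (2 * Real.pi) := by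
    intro x
    obtain ⟨n, hn⟩ := exp_eq_exp_iff_exists_int.mp (h x)
    have him : f x = g x + n * (2 * Real.pi) := by simpa using congrArg im hn
    exact AddSubgroup.mem_zmultiples_iff.mpr ⟨n, by rw [zsmul_eq_mul]; linarith⟩
  let k : X → AddSubgroup.zmultiples (2 * Real.pi) := fun x => ⟨f x - g x, hmem x⟩
  exact congrArg Subtype.val (PreconnectedSpace.constant ‹_› (f := k) (by fun_prop))

theorem Complex.exp_mul_I_eq_of_mul_conj_eq_one {r s a b : ℝ} (hr : 0 ≤ r) (hs : 0 ≤ s)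
    (h : r * exp (I * a) * conj (s * exp (I * b)) = 1) : exp (I * a) = exp (I * b) := by
  have hconj : conj (s * exp (I * b)) = s * exp (-(I * b)) := by
    rw [map_mul, ← exp_conj]
    simp
  rw [hconj, show (r : ℂ) * exp (I * a) * (s * exp (-(I * b)))
      = (r * s : ℝ) * exp (I * a - I * b) by push_cast; rw [exp_sub, exp_neg]; ring] at h
  have hrs : r * s = 1 := by
    simpa [norm_exp, abs_of_nonneg hr, abs_of_nonneg hs] using congrArg (‖·‖) h
  rw [hrs, Complex.ofReal_one, one_mul, exp_sub, div_eq_one_iff_eq (exp_ne_zero _)] at h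
  exact h

theorem stmt_4_general (n : ℕ) (x : ℂ → Matrix (Fin n) (Fin n) ℂ)
    (hreal : ∀ z : ℂ, ‖z‖ = 1 → x z * (x (star z)).conjTranspose = 1)
    (θ : ℝ → ℝ) (hθ : Continuous θ)
    (hlift : ∀ t : ℝ, (x (Complex.exp (Complex.I * t))).det =
        ((‖(x (Complex.exp (Complex.I * t))).det‖ : ℝ) : ℂ) *
          Complex.exp (Complex.I * θ t)) :
    θ (2 * Real.pi) = θ 0 := by
  set D : ℝ → ℂ := fun t => (x (exp (I * t))).det with hD
  have hdet : ∀ t, D t * conj (D (-t)) = 1 := by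
    intro t
    have h := congrArg Matrix.det (hreal _ (norm_exp_I_mul_ofReal t))
    rw [Matrix.det_mul, Matrix.det_one, Matrix.det_conjTranspose] at h
    have hstar : star (exp (I * t)) = exp (I * ↑(-t)) := by
      rw [star_def, ← exp_conj, map_mul, conj_I, conj_ofReal, ofReal_neg, neg_mul, mul_neg]
    rwa [hstar] at h
  have hexp_neg : ∀ t, exp (I * θ t) = exp (I * θ (-t)) := fun t =>
    exp_mul_I_eq_of_mul_conj_eq_one (norm_nonneg _) (norm_nonneg (D (-t)))
      (by rw [← hlift, ← hlift]; exact hdet t)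
  have hexp_shift : ∀ t, exp (I * θ (t + 2 * Real.pi)) = exp (I * θ t) := by
    intro t
    have hD_per : D (t + 2 * Real.pi) = D t := by
      simp only [hD, ofReal_add, ofReal_mul, ofReal_ofNat, mul_add, exp_add,
        mul_comm I (2 * Real.pi : ℂ), exp_two_pi_mul_I, mul_one]
    have hne : ((‖D t‖ : ℝ) : ℂ) ≠ 0 := by
      simpa using left_ne_zero_of_mul_eq_one (hdet t)
    refine mul_left_cancel₀ hne ?_
    calc (‖D t‖ : ℂ) * exp (I * θ (t + 2 * Real.pi))
        = ‖D (t + 2 * Real.pi)‖ * exp (I * θ (t + 2 * Real.pi)) := by rw [hD_per]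
      _ = D t := (hlift _).symm.trans hD_per
      _ = ‖D t‖ * exp (I * θ t) := hlift t
  have heven := sub_eq_sub_of_exp_mul_I_eq hθ (hθ.comp continuous_neg) hexp_neg (2 * Real.pi) 0
  have hshift := sub_eq_sub_of_exp_mul_I_eq (hθ.comp (continuous_add_const _)) hθ hexp_shift
    0 (-(2 * Real.pi))
  simp only [Function.comp_apply, neg_zero, sub_self, zero_add, neg_add_cancel] at heven hshift
  linarith

/-- If a continuous loop `x : S¹ → GL(n,ℂ)` satisfies the reality
condition `x(z) = (conj(x(conj z))ᵀ)⁻¹`, then the winding number of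
`z ↦ det(x(z))` around `0` is zero.  The winding number is encoded via a
continuous argument lift `θ` of the determinant along the circle: any such lift
satisfies `θ(2π) = θ(0)`. -/
theorem stmt_4 (n : ℕ) (x : ℂ → Matrix (Fin n) (Fin n) ℂ)
    (hcont : ∀ i j, ContinuousOn (fun z => x z i j) (Metric.sphere 0 1))
    (hunit : ∀ z : ℂ, ‖z‖ = 1 → IsUnit (x z))
    (hreal : ∀ z : ℂ, ‖z‖ = 1 → x z * (x (star z)).conjTranspose = 1)
    (θ : ℝ → ℝ) (hθ : Continuous θ)
    (hlift : ∀ t : ℝ, (x (Complex.exp (Complex.I * t))).det =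
        ((‖(x (Complex.exp (Complex.I * t))).det‖ : ℝ) : ℂ) *
          Complex.exp (Complex.I * θ t)) :
    θ (2 * Real.pi) = θ 0 :=
  stmt_4_general n x hreal θ hθ hlift
end

section
/- Suppose H is a topological group with closed subgroups H⁻, H⁺ such that multiplication H⁻ × H⁺ → H is a homeomorphism, and suppose the constant subgroup H⁰ := H⁻ ∩ H⁺ is a deformation retract of both H⁻ and H⁺. Then H⁰ is a deformation retract of H; in particular, if H⁰ is connected then H is connected. -/
/-
A deformation retraction of each factor gives one of the product, and the homeomorphism
`H⁻ × H⁺ ≃ₜ H` transports it to `H`. Since `(x, y) ↦ x * y` sends `H⁰ × H⁰` onto `H⁰`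
(take `y = 1`), the retract of `H` is again `H⁰`. Every point `x` of `H` is joined to `H⁰`
by the path `t ↦ Γ t x`, so `H` is connected once `H⁰` is.
-/

/-- `Γ` is a deformation retraction of `X` onto the subset `A`. -/
def IsDefRetract {X : Type*} [TopologicalSpace X] (A : Set X)
    (Γ : unitInterval → X → X) : Prop :=
  Continuous (fun p : unitInterval × X => Γ p.1 p.2) ∧ (∀ x, Γ 1 x = x) ∧
    (∀ x, Γ 0 x ∈ A) ∧ ∀ t : unitInterval, ∀ a ∈ A, Γ t a = a

open Set

namespace IsDefRetract

variable {X Y : Type*} [TopologicalSpace X] [TopologicalSpace Y]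

theorem prod {A : Set X} {B : Set Y} {Γ : unitInterval → X → X} {Δ : unitInterval → Y → Y}
    (hΓ : IsDefRetract A Γ) (hΔ : IsDefRetract B Δ) :
    IsDefRetract (A ×ˢ B) (fun t p => (Γ t p.1, Δ t p.2)) := by
  obtain ⟨hΓc, hΓ1, hΓ0, hΓA⟩ := hΓ
  obtain ⟨hΔc, hΔ1, hΔ0, hΔB⟩ := hΔ
  refine ⟨?_, fun p => by simp [hΓ1, hΔ1], fun p => ⟨hΓ0 p.1, hΔ0 p.2⟩,
    fun t p hp => by simp [hΓA t _ hp.1, hΔB t _ hp.2]⟩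
  exact (hΓc.comp (continuous_fst.prodMk (continuous_fst.comp continuous_snd))).prodMk
    (hΔc.comp (continuous_fst.prodMk (continuous_snd.comp continuous_snd)))

theorem homeomorph {A : Set X} {Γ : unitInterval → X → X} (hΓ : IsDefRetract A Γ)
    (e : X ≃ₜ Y) : IsDefRetract (e '' A) (fun t y => e (Γ t (e.symm y))) := by
  obtain ⟨hc, h1, h0, hA⟩ := hΓ
  refine ⟨?_, fun y => by simp [h1], fun y => mem_image_of_mem e (h0 _), ?_⟩
  · exact e.continuous.comp
      (hc.comp (continuous_fst.prodMk (e.continuous_symm.comp continuous_snd)))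
  · rintro t _ ⟨x, hx, rfl⟩
    simp [hA t x hx]

theorem connectedSpace {A : Set X} {Γ : unitInterval → X → X} (hΓ : IsDefRetract A Γ)
    (hA : IsConnected A) : ConnectedSpace X := by
  obtain ⟨hc, h1, h0, -⟩ := hΓ
  obtain ⟨⟨a, ha⟩, hApre⟩ := hA
  have hpath (x : X) : IsPreconnected (range (fun t => Γ t x) ∪ A) :=
    (isPreconnected_range (hc.comp (Continuous.prodMk_left x))).union (Γ 0 x)
      ⟨0, rfl⟩ (h0 x) hApre
  have : PreconnectedSpace X := ⟨isPreconnected_of_forall a fun x _ =>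
    ⟨_, subset_univ _, Or.inr ha, Or.inl ⟨1, h1 x⟩, hpath x⟩⟩
  exact ⟨⟨a⟩⟩

end IsDefRetract

theorem Subgroup.image_mul_prod_inter {G : Type*} [Group G] (K L : Subgroup G) {f : K × L → G}
    (hf : ∀ p : K × L, f p = (p.1 : G) * (p.2 : G)) :
    f '' ({x : K | (x : G) ∈ L} ×ˢ {y : L | (y : G) ∈ K}) = (K : Set G) ∩ (L : Set G) := by
  ext g
  constructor
  · rintro ⟨⟨x, y⟩, ⟨hx, hy⟩, rfl⟩
    rw [hf]
    exact ⟨K.mul_mem x.2 hy, L.mul_mem hx y.2⟩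
  · rintro ⟨hgK, hgL⟩
    exact ⟨(⟨g, hgK⟩, 1), ⟨hgL, K.one_mem⟩, by simp [hf]⟩

theorem stmt_11_general (H : Type*) [Group H] [TopologicalSpace H]
    (Hm Hp : Subgroup H)
    (e : (↥Hm × ↥Hp) ≃ₜ H) (he : ∀ p : ↥Hm × ↥Hp, e p = (p.1 : H) * (p.2 : H))
    (Γm : unitInterval → ↥Hm → ↥Hm)
    (hΓm : IsDefRetract {x : ↥Hm | (x : H) ∈ Hp} Γm)
    (Γp : unitInterval → ↥Hp → ↥Hp)
    (hΓp : IsDefRetract {x : ↥Hp | (x : H) ∈ Hm} Γp) :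
    (∃ Γ : unitInterval → H → H, IsDefRetract ((Hm : Set H) ∩ (Hp : Set H)) Γ) ∧
      (IsConnected ((Hm : Set H) ∩ (Hp : Set H)) → ConnectedSpace H) := by
  have hΓ := (hΓm.prod hΓp).homeomorph e
  rw [Subgroup.image_mul_prod_inter Hm Hp he] at hΓ
  exact ⟨⟨_, hΓ⟩, hΓ.connectedSpace⟩

/-- If `H` is a topological group with closed subgroups `H⁻`, `H⁺`
such that multiplication `H⁻ × H⁺ → H` is a homeomorphism, and the constant
subgroup `H⁰ = H⁻ ∩ H⁺` is a deformation retract of both `H⁻` and `H⁺`, then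
`H⁰` is a deformation retract of `H`; in particular, if `H⁰` is connected then
`H` is connected. -/
theorem stmt_11 (H : Type*) [Group H] [TopologicalSpace H] [IsTopologicalGroup H]
    (Hm Hp : Subgroup H) (hmc : IsClosed (Hm : Set H)) (hpc : IsClosed (Hp : Set H))
    (e : (↥Hm × ↥Hp) ≃ₜ H) (he : ∀ p : ↥Hm × ↥Hp, e p = (p.1 : H) * (p.2 : H))
    (Γm : unitInterval → ↥Hm → ↥Hm)
    (hΓm : IsDefRetract {x : ↥Hm | (x : H) ∈ Hp} Γm)
    (Γp : unitInterval → ↥Hp → ↥Hp)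
    (hΓp : IsDefRetract {x : ↥Hp | (x : H) ∈ Hm} Γp) :
    (∃ Γ : unitInterval → H → H, IsDefRetract ((Hm : Set H) ∩ (Hp : Set H)) Γ) ∧
      (IsConnected ((Hm : Set H) ∩ (Hp : Set H)) → ConnectedSpace H) :=
  stmt_11_general H Hm Hp e he Γm hΓm Γp hΓp
end
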